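/- For every positive rational r/s, the left q-deformation satisfies [r/s]^♭_q = t_{1,q}^{a_1} t_{2,q}^{-a_2} ⋯ t_{1,q}^{a_{2m-1}} t_{2,q}^{-a_{2m}} · (1/(1-q)), where [a_1,...,a_{2m}] is the even-length continued fraction expansion of r/s. -/

import Mathlib

noncomputable section

def cfVal : List ℤ → ℚ
  | [] => 0
  | a :: t => a + (cfVal t)⁻¹

def pairsToList (L : List (ℕ × ℕ)) : List ℤ :=
  L.flatMap fun p => [(p.1 : ℤ), (p.2 : ℤ)]

def IsCFE (L : List (ℕ × ℕ)) (x : ℚ) : Prop :=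
  L ≠ [] ∧ (∀ p ∈ L, 1 ≤ p.2) ∧ (∀ p ∈ L.tail, 1 ≤ p.1) ∧
    cfVal (pairsToList L) = x

def t1q {K : Type*} [Field K] (q : K) : Matrix (Fin 2) (Fin 2) K := !![q, 1; 0, 1]
def t2q {K : Type*} [Field K] (q : K) : Matrix (Fin 2) (Fin 2) K := !![1, 0; -q, q]
def t1qInv {K : Type*} [Field K] (q : K) : Matrix (Fin 2) (Fin 2) K := !![q⁻¹, -q⁻¹; 0, 1]
def t2qInv {K : Type*} [Field K] (q : K) : Matrix (Fin 2) (Fin 2) K := !![1, 0; 1, q⁻¹]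

def qWord {K : Type*} [Field K] (q : K) : List (ℕ × ℕ) → Matrix (Fin 2) (Fin 2) K
  | [] => 1
  | (a, b) :: rest => t1q q ^ a * t2qInv q ^ b * qWord q rest

def qWordNeg {K : Type*} [Field K] (q : K) : List (ℕ × ℕ) → Matrix (Fin 2) (Fin 2) K
  | [] => 1
  | (a, b) :: rest => t1qInv q ^ a * t2q q ^ b * qWordNeg q rest

def qSharpK {K : Type*} [Field K] (q : K) (a : ℕ) : K := ∑ i ∈ Finset.range a, q ^ i

def qFlatK {K : Type*} [Field K] (q : K) (a : ℕ) : K :=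
  (∑ i ∈ Finset.range (a - 1), q ^ i) + q ^ a

def rightCF {K : Type*} [Field K] (q : K) : List (ℕ × ℕ) → K
  | [] => 0
  | (a, b) :: rest =>
      qSharpK q a + q ^ a / (qSharpK q⁻¹ b + (q⁻¹) ^ b / rightCF q rest)

def leftCF {K : Type*} [Field K] (q : K) : List (ℕ × ℕ) → K
  | [] => 0
  | [(a, b)] => qSharpK q a + q ^ a / qFlatK q⁻¹ b
  | (a, b) :: rest =>
      qSharpK q a + q ^ a / (qSharpK q⁻¹ b + (q⁻¹) ^ b / leftCF q rest)

def FareyDecomp (p q u v : ℕ) : Prop :=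
  Nat.Coprime p q ∧ Nat.Coprime u v ∧ u * q = p * v + 1

def AssocInt (r s l : ℕ) : Prop :=
  ∃ (L : List (ℕ × ℕ)) (a b : ℕ),
    IsCFE L ((r : ℚ) / s) ∧ L.getLast? = some (a, b) ∧
    l = if 2 ≤ b then 0 else a

def bumpLast : List (ℕ × ℕ) → List (ℕ × ℕ)
  | [] => []
  | [(c, d)] => [(c, d + 1)]
  | x :: xs => x :: bumpLast xs

/-! The block `t₁^a t₂^(-b)` acts on the ratio `z = x / y` of a column vector `(x, y)` as the
Möbius map `z ↦ [a]_q + q^a / ([b]_{q⁻¹} + q^(-b) / z)`, one step of the continued fraction.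
The starting vector `(1, 1 - q)` stands for `z = 1 / (1 - q)`, and
`[b]♯_{q⁻¹} + q^(-b) (1 - q) = [b]♭_{q⁻¹}` produces the last term. The computation is valid as
long as no vector along the way has a vanishing entry. For `q = X` this holds because
`q^(b₁ + ⋯ + b_m)` times the word has polynomial entries, and at `q = 1` all the vectors have
positive entries. -/

open Matrix

section Field

variable {K : Type*} [Field K]

lemma qSharpK_succ (q : K) (a : ℕ) : qSharpK q (a + 1) = qSharpK q a + q ^ a :=
  Finset.sum_range_succ _ _

@[simp]
lemma qSharpK_one (a : ℕ) : qSharpK (1 : K) a = a := by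
  simp [qSharpK]

lemma qFlatK_add_pow (p : K) {b : ℕ} (hb : 1 ≤ b) :
    qFlatK p b + p ^ (b - 1) = qSharpK p b + p ^ b := by
  obtain ⟨n, rfl⟩ := Nat.exists_eq_add_of_le' hb
  simp only [qFlatK, Nat.add_sub_cancel, qSharpK_succ]
  rw [qSharpK]
  ring

lemma qFlatK_inv (q : K) (hq : q ≠ 0) {b : ℕ} (hb : 1 ≤ b) :
    qFlatK q⁻¹ b = qSharpK q⁻¹ b + q⁻¹ ^ b * (1 - q) := by
  have hpow : q⁻¹ ^ b * q = q⁻¹ ^ (b - 1) := by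
    obtain ⟨n, rfl⟩ := Nat.exists_eq_add_of_le' hb
    rw [pow_succ, mul_assoc, inv_mul_cancel₀ hq, mul_one, Nat.add_sub_cancel]
  linear_combination qFlatK_add_pow q⁻¹ hb + hpow

lemma t1q_pow (q : K) (a : ℕ) : t1q q ^ a = !![q ^ a, qSharpK q a; 0, 1] := by
  induction a with
  | zero => simp [qSharpK, Matrix.one_fin_two]
  | succ n ih =>
    rw [pow_succ, ih, t1q, qSharpK_succ]
    ext i j
    fin_cases i <;> fin_cases j <;> simp [Matrix.mul_apply] <;> ring

lemma t2qInv_pow (q : K) (b : ℕ) : t2qInv q ^ b = !![1, 0; qSharpK q⁻¹ b, q⁻¹ ^ b] := by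
  induction b with
  | zero => simp [qSharpK, Matrix.one_fin_two]
  | succ n ih =>
    rw [pow_succ, ih, t2qInv, qSharpK_succ]
    ext i j
    fin_cases i <;> fin_cases j <;> simp [Matrix.mul_apply, pow_succ]

lemma t1q_pow_mul_t2qInv_pow_mulVec (q : K) (a b : ℕ) (v : Fin 2 → K) :
    (t1q q ^ a * t2qInv q ^ b) *ᵥ v =
      ![qSharpK q a * (qSharpK q⁻¹ b * v 0 + q⁻¹ ^ b * v 1) + q ^ a * v 0,
        qSharpK q⁻¹ b * v 0 + q⁻¹ ^ b * v 1] := by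
  ext i
  fin_cases i
  · simp [t1q_pow, t2qInv_pow, mulVec, dotProduct]
    ring
  · simp [t1q_pow, t2qInv_pow, mulVec, dotProduct]

lemma t1q_pow_mul_t2qInv_pow_mulVec_div (q : K) (a b : ℕ) (v : Fin 2 → K) (hv : v 0 ≠ 0)
    (hw : ((t1q q ^ a * t2qInv q ^ b) *ᵥ v) 1 ≠ 0) :
    ((t1q q ^ a * t2qInv q ^ b) *ᵥ v) 0 / ((t1q q ^ a * t2qInv q ^ b) *ᵥ v) 1 =
      qSharpK q a + q ^ a / (qSharpK q⁻¹ b + q⁻¹ ^ b / (v 0 / v 1)) := by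
  rw [t1q_pow_mul_t2qInv_pow_mulVec] at hw ⊢
  simp only [Matrix.cons_val_zero, Matrix.cons_val_one] at hw ⊢
  set w := qSharpK q⁻¹ b * v 0 + q⁻¹ ^ b * v 1
  have hden : qSharpK q⁻¹ b + q⁻¹ ^ b / (v 0 / v 1) = w / v 0 := by
    rw [div_div_eq_mul_div, eq_div_iff hv, add_mul, div_mul_cancel₀ _ hv]
  rw [hden, div_div_eq_mul_div, add_div, mul_div_cancel_right₀ _ hw]

def qWordVec (q : K) (L : List (ℕ × ℕ)) : Fin 2 → K := qWord q L *ᵥ ![1, 1 - q]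

lemma qWordVec_cons (q : K) (a b : ℕ) (L : List (ℕ × ℕ)) :
    qWordVec q ((a, b) :: L) = (t1q q ^ a * t2qInv q ^ b) *ᵥ qWordVec q L := by
  simp only [qWordVec, qWord, mulVec_mulVec]

theorem leftCF_eq_qWordVec_div (q : K) (hq : q ≠ 0) {L : List (ℕ × ℕ)} (hL : L ≠ [])
    (hb : ∀ p ∈ L, 1 ≤ p.2)
    (hv : ∀ a b L', 1 ≤ b → ∀ i, qWordVec q ((a, b) :: L') i ≠ 0) :
    leftCF q L = qWordVec q L 0 / qWordVec q L 1 := by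
  induction L with
  | nil => exact absurd rfl hL
  | cons p rest ih =>
    obtain ⟨a, b⟩ := p
    have hb₁ : 1 ≤ b := hb (a, b) List.mem_cons_self
    have hw := hv a b rest hb₁ 1
    rw [qWordVec_cons] at hw ⊢
    rcases rest with _ | ⟨⟨c, d⟩, rest⟩
    · rw [t1q_pow_mul_t2qInv_pow_mulVec_div q a b _ (by simp [qWordVec, qWord]) hw]
      simp [leftCF, qWordVec, qWord, qFlatK_inv q hq hb₁]
    · have hd : 1 ≤ d := hb (c, d) (by simp)
      rw [t1q_pow_mul_t2qInv_pow_mulVec_div q a b _ (hv c d rest hd 0) hw,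
        ← ih (List.cons_ne_nil _ _) fun p hp => hb p (List.mem_cons_of_mem _ hp)]
      rfl

end Field

section Ordered

variable {K : Type*} [Field K] [LinearOrder K] [IsStrictOrderedRing K]

lemma qWordVec_one_nonneg (L : List (ℕ × ℕ)) :
    0 < qWordVec (1 : K) L 0 ∧ 0 ≤ qWordVec (1 : K) L 1 := by
  induction L with
  | nil => simp [qWordVec, qWord]
  | cons p L ih =>
    obtain ⟨a, b⟩ := p
    simp only [qWordVec_cons, t1q_pow_mul_t2qInv_pow_mulVec, qSharpK_one, inv_one, one_pow, one_mul,
      Matrix.cons_val_zero, Matrix.cons_val_one]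
    obtain ⟨hx, hy⟩ := ih
    constructor <;> positivity

lemma qWordVec_one_cons_pos (a : ℕ) {b : ℕ} (hb : 1 ≤ b) (L : List (ℕ × ℕ)) (i : Fin 2) :
    0 < qWordVec (1 : K) ((a, b) :: L) i := by
  obtain ⟨hx, hy⟩ := qWordVec_one_nonneg (K := K) L
  have hb' : (1 : K) ≤ b := by exact_mod_cast hb
  simp only [qWordVec_cons, t1q_pow_mul_t2qInv_pow_mulVec, qSharpK_one, inv_one, one_pow, one_mul]
  fin_cases i <;> simp <;> positivity

end Ordered

section Numerator

variable {R S : Type*} [CommSemiring R] [CommSemiring S]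

def qWordNum (q : R) : List (ℕ × ℕ) → Matrix (Fin 2) (Fin 2) R
  | [] => 1
  | (a, b) :: L => !![q, 1; 0, 1] ^ a * !![q, 0; q, 1] ^ b * qWordNum q L

lemma map_qWordNum (f : R →+* S) (q : R) (L : List (ℕ × ℕ)) :
    (qWordNum q L).map f = qWordNum (f q) L := by
  have map_fin_two (x y z w : R) : !![x, y; z, w].map f = !![f x, f y; f z, f w] := by
    ext i j
    fin_cases i <;> fin_cases j <;> simp
  induction L with
  | nil => simp [qWordNum]
  | cons p L ih =>
    obtain ⟨a, b⟩ := p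
    simp [qWordNum, ← ih, Matrix.map_mul, Matrix.map_pow, map_fin_two]

lemma map_qWordNum_mulVec {R S : Type*} [CommRing R] [CommRing S] (f : R →+* S) (q : R)
    (L : List (ℕ × ℕ)) (i : Fin 2) :
    f ((qWordNum q L *ᵥ ![1, 1 - q]) i) = (qWordNum (f q) L *ᵥ ![1, 1 - f q]) i := by
  rw [RingHom.map_mulVec, map_qWordNum]
  congr 2
  ext j
  fin_cases j <;> simp

end Numerator

lemma qWord_eq_smul_qWordNum {K : Type*} [Field K] {q : K} (hq : q ≠ 0) (L : List (ℕ × ℕ)) :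
    qWord q L = q⁻¹ ^ (L.map Prod.snd).sum • qWordNum q L := by
  have ht2 : t2qInv q = q⁻¹ • !![q, 0; q, 1] := by
    ext i j
    fin_cases i <;> fin_cases j <;> simp [t2qInv, hq]
  induction L with
  | nil => simp [qWord, qWordNum]
  | cons p L ih =>
    obtain ⟨a, b⟩ := p
    simp only [qWord, qWordNum, ih, ht2, smul_pow, Matrix.mul_smul, Matrix.smul_mul, smul_smul,
      List.map_cons, List.sum_cons, pow_add, mul_comm (q⁻¹ ^ b)]
    rfl

lemma qWordVec_eq_smul {K : Type*} [Field K] {q : K} (hq : q ≠ 0) (L : List (ℕ × ℕ)) :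
    qWordVec q L = q⁻¹ ^ (L.map Prod.snd).sum • (qWordNum q L *ᵥ ![1, 1 - q]) := by
  rw [qWordVec, qWord_eq_smul_qWordNum hq, smul_mulVec]

lemma qWordVec_X_ne_zero (a : ℕ) {b : ℕ} (hb : 1 ≤ b) (L : List (ℕ × ℕ)) (i : Fin 2) :
    qWordVec (RatFunc.X : RatFunc ℚ) ((a, b) :: L) i ≠ 0 := by
  set P := qWordNum (Polynomial.X : Polynomial ℚ) ((a, b) :: L) *ᵥ ![1, 1 - Polynomial.X]
  have hP : (P i).eval 1 = qWordVec (1 : ℚ) ((a, b) :: L) i := by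
    rw [← Polynomial.coe_evalRingHom, map_qWordNum_mulVec, qWordVec_eq_smul one_ne_zero]
    simp
  have hPne : P i ≠ 0 := fun h => by
    simpa [h] using (qWordVec_one_cons_pos a hb L i).trans_eq hP.symm
  rw [qWordVec_eq_smul RatFunc.X_ne_zero, Pi.smul_apply, smul_eq_mul, ← RatFunc.algebraMap_X,
    ← map_qWordNum_mulVec]
  exact mul_ne_zero (pow_ne_zero _ (inv_ne_zero RatFunc.X_ne_zero))
    ((map_ne_zero_iff _ (RatFunc.algebraMap_injective ℚ)).2 hPne)

theorem stmt9_general (r s : ℕ)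
    (L : List (ℕ × ℕ)) (hL : IsCFE L ((r : ℚ) / s)) :
    ((qWord (RatFunc.X : RatFunc ℚ) L).mulVec ![1, 1 - RatFunc.X]) 1 ≠ 0 ∧
    leftCF (RatFunc.X : RatFunc ℚ) L =
      ((qWord (RatFunc.X : RatFunc ℚ) L).mulVec ![1, 1 - RatFunc.X]) 0 /
        ((qWord (RatFunc.X : RatFunc ℚ) L).mulVec ![1, 1 - RatFunc.X]) 1 := by
  obtain ⟨hne, hb, -, -⟩ := hL
  obtain ⟨⟨a, b⟩, L, rfl⟩ := List.exists_cons_of_ne_nil hne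
  exact ⟨qWordVec_X_ne_zero a (hb _ List.mem_cons_self) L 1,
    leftCF_eq_qWordVec_div _ RatFunc.X_ne_zero hne hb fun a b L hb => qWordVec_X_ne_zero a hb L⟩

theorem stmt9 (r s : ℕ) (hr : 0 < r) (hs : 0 < s) (hco : Nat.Coprime r s)
    (L : List (ℕ × ℕ)) (hL : IsCFE L ((r : ℚ) / s)) :
    ((qWord (RatFunc.X : RatFunc ℚ) L).mulVec ![1, 1 - RatFunc.X]) 1 ≠ 0 ∧
    leftCF (RatFunc.X : RatFunc ℚ) L =
      ((qWord (RatFunc.X : RatFunc ℚ) L).mulVec ![1, 1 - RatFunc.X]) 0 /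
        ((qWord (RatFunc.X : RatFunc ℚ) L).mulVec ![1, 1 - RatFunc.X]) 1 :=
  stmt9_general r s L hL
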